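/- arXiv:2201.09991 — 5 statements merged into one kernel-verified Lean document; each statement's English description precedes it below -/
import Mathlib

section
/- In an arrow space, if two arrows with common tail A have equal measure and their normalized pre-inner product equals 1 (i.e. ⟪AB,AD⟫ = ‖AB‖·‖AD‖ with ‖AB‖ = ‖AD‖), then their heads coincide: B = D. -/
/-- If two arrows with common tail A have equal measure and their
pre-inner product equals the product of their measures, then their heads coincide. -/
theorem arrow_same_dir_same_length_eq_head {P : Type*} (inner : P → P → P → P → ℝ)
    (hpos : ∀ A B : P, 0 ≤ inner A B A B)
    (hdef : ∀ A B : P, inner A B A B = 0 ↔ A = B)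
    (hsymm : ∀ A B C D : P, inner A B C D = inner C D A B)
    (hadd : ∀ A B C L M : P, inner A C L M = inner A B L M + inner B C L M)
    (hneg : ∀ A B C D : P, inner B A C D = - inner A B C D)
    (A B D : P)
    (hnorm : Real.sqrt (inner A B A B) = Real.sqrt (inner A D A D))
    (hdir : inner A B A D = Real.sqrt (inner A B A B) * Real.sqrt (inner A D A D))
    (hne : Real.sqrt (inner A B A B) ≠ 0) :
    B = D := by
  have hxy : inner A B A B = inner A D A D := by
    have := congrArg (fun t => t ^ 2) hnorm
    simpa [Real.sq_sqrt (hpos A B), Real.sq_sqrt (hpos A D)] using this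
  have hdir' : inner A B A D = inner A B A B := by
    rw [hdir, ← hnorm]; exact Real.mul_self_sqrt (hpos A B)
  have key : inner B D B D = 0 := by
    have e1 : inner B D B D = inner B A B D + inner A D B D := hadd B A D B D
    have e2 : inner B D A B = inner B A A B + inner A D A B := hadd B A D A B
    have e3 : inner B D A D = inner B A A D + inner A D A D := hadd B A D A D
    rw [e1, hneg A B B D, hsymm A B B D, e2, hneg A B A B, hsymm A D B D, e3,
      hneg A B A D, hsymm A D A B, hdir', hxy]
    ring
  exact (hdef B D).mp key
end

section
/- Let A, B, D be three distinct points of an arrow space with ⟪AB,AD⟫ = ‖AB‖·‖AD‖ (normalized pre-inner product equal to 1). Then ⟪AB,BD⟫ = ‖AB‖·‖BD‖ or ⟪AB,BD⟫ = -‖AB‖·‖BD‖. -/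
/-- If ⟪AB,AD⟫ = ‖AB‖·‖AD‖ for distinct points A, B, D, then
⟪AB,BD⟫ = ±‖AB‖·‖BD‖. -/
theorem arrow_aligned_inner_BD_pm {P : Type*} (inner : P → P → P → P → ℝ)
    (hpos : ∀ A B : P, 0 ≤ inner A B A B)
    (hdef : ∀ A B : P, inner A B A B = 0 ↔ A = B)
    (hsymm : ∀ A B C D : P, inner A B C D = inner C D A B)
    (hadd : ∀ A B C L M : P, inner A C L M = inner A B L M + inner B C L M)
    (hneg : ∀ A B C D : P, inner B A C D = - inner A B C D)
    (A B D : P) (hAB : A ≠ B) (hAD : A ≠ D) (hBD : B ≠ D)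
    (hdir : inner A B A D = Real.sqrt (inner A B A B) * Real.sqrt (inner A D A D)) :
    inner A B B D = Real.sqrt (inner A B A B) * Real.sqrt (inner B D B D) ∨
    inner A B B D = -(Real.sqrt (inner A B A B) * Real.sqrt (inner B D B D)) := by
  set sa := Real.sqrt (inner A B A B) with hsa
  set sd := Real.sqrt (inner A D A D) with hsd
  have ha : sa * sa = inner A B A B := Real.mul_self_sqrt (hpos A B)
  have hd : sd * sd = inner A D A D := Real.mul_self_sqrt (hpos A D)
  -- inner A B B D = inner A B A D - inner A B A B
  have h1 : inner A D A B = inner A B A B + inner B D A B := hadd A B D A B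
  have h2 : inner A B B D = inner A B A D - inner A B A B := by
    rw [hsymm A B B D, hsymm A B A D] at *
    linarith [h1]
  -- inner B D B D = inner A B A B - 2 * inner A B A D + inner A D A D
  have h3 : inner B D B D = inner B A B D + inner A D B D := hadd B A D B D
  have h4 : inner B D A D = inner B A A D + inner A D A D := hadd B A D A D
  have h5 : inner B D B D
      = inner A B A B - 2 * inner A B A D + inner A D A D := by
    have e1 : inner B A B D = - inner A B B D := hneg A B B D
    have e2 : inner A D B D = inner B D A D := hsymm A D B D
    have e3 : inner B A A D = - inner A B A D := hneg A B A D
    rw [h3, e1, e2, h4, e3, h2]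
    ring
  have hbd : inner B D B D = (sa - sd) ^ 2 := by
    rw [h5, hdir, ← ha, ← hd]; ring
  have hsbd : Real.sqrt (inner B D B D) = |sa - sd| := by
    rw [hbd, Real.sqrt_sq_eq_abs]
  have habbd : inner A B B D = sa * (sd - sa) := by
    rw [h2, hdir, ← ha]; ring
  rcases le_total sa sd with h | h
  · left
    rw [habbd, hsbd, abs_of_nonpos (by linarith)]
    ring
  · right
    rw [habbd, hsbd, abs_of_nonneg (by linarith)]
    ring
end

section
/- Let A, B, D be three distinct points of an arrow space with ⟪AB,AD⟫ = ‖AB‖·‖AD‖. Then either ‖AD‖ = ‖AB‖ + ‖BD‖ or ‖AB‖ = ‖AD‖ + ‖DB‖ (the betweenness dichotomy for aligned points). -/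
/-- Betweenness dichotomy for aligned points: if ⟪AB,AD⟫ = ‖AB‖·‖AD‖ for
distinct A, B, D then ‖AD‖ = ‖AB‖ + ‖BD‖ or ‖AB‖ = ‖AD‖ + ‖DB‖. -/
theorem arrow_aligned_betweenness_dichotomy {P : Type*} (inner : P → P → P → P → ℝ)
    (hpos : ∀ A B : P, 0 ≤ inner A B A B)
    (hdef : ∀ A B : P, inner A B A B = 0 ↔ A = B)
    (hsymm : ∀ A B C D : P, inner A B C D = inner C D A B)
    (hadd : ∀ A B C L M : P, inner A C L M = inner A B L M + inner B C L M)
    (hneg : ∀ A B C D : P, inner B A C D = - inner A B C D)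
    (A B D : P) (hAB : A ≠ B) (hAD : A ≠ D) (hBD : B ≠ D)
    (hdir : inner A B A D = Real.sqrt (inner A B A B) * Real.sqrt (inner A D A D)) :
    Real.sqrt (inner A D A D) = Real.sqrt (inner A B A B) + Real.sqrt (inner B D B D) ∨
    Real.sqrt (inner A B A B) = Real.sqrt (inner A D A D) + Real.sqrt (inner D B D B) := by
  set a := Real.sqrt (inner A B A B) with ha
  set d := Real.sqrt (inner A D A D) with hd
  have ha0 : 0 ≤ a := Real.sqrt_nonneg _
  have hd0 : 0 ≤ d := Real.sqrt_nonneg _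
  have ha2 : a ^ 2 = inner A B A B := Real.sq_sqrt (hpos A B)
  have hd2 : d ^ 2 = inner A D A D := Real.sq_sqrt (hpos A D)
  -- compute inner B D B D = (d - a)^2
  have h1 : inner B D B D = inner B A B D + inner A D B D := hadd B A D B D
  have h2 : inner A B B D = inner A B B A + inner A B A D := by
    rw [hsymm A B B D, hadd B A D A B, hsymm B A A B, hsymm A D A B]
  have h3 : inner A B B A = - inner A B A B := by
    rw [hsymm A B B A, hneg A B A B]
  have h4 : inner A D B D = - inner A B A D + inner A D A D := by
    rw [hsymm A D B D, hadd B A D A D, hneg A B A D]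
  have h5 : inner B A B D = - inner A B B D := hneg A B B D
  have hBD2 : inner B D B D = (d - a) ^ 2 := by
    rw [h1, h5, h2, h3, h4, hdir]
    ring_nf
    nlinarith [ha2, hd2]
  have hDB : inner D B D B = (d - a) ^ 2 := by
    rw [hneg B D D B, hsymm B D D B, hneg B D B D, neg_neg, hBD2]
  have habs : Real.sqrt ((d - a) ^ 2) = |d - a| := Real.sqrt_sq_eq_abs _
  rcases le_total a d with h | h
  · left
    rw [hBD2, habs, abs_of_nonneg (by linarith)]
    ring
  · right
    rw [hDB, habs, abs_of_nonpos (by linarith)]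
    ring
end

section
/- Let A, B, D be three distinct points of an arrow space with ⟪AB,AD⟫ = -‖AB‖·‖AD‖ (opposite direction). Then ‖AD‖ = ‖BD‖ - ‖AB‖, i.e. A lies between D and B in the metric sense ‖BD‖ = ‖BA‖ + ‖AD‖. -/
/-- Opposite direction case: if ⟪AB,AD⟫ = -‖AB‖·‖AD‖ for distinct A, B, D then
‖AD‖ = ‖BD‖ - ‖AB‖. -/
theorem arrow_opposite_dir_measure {P : Type*} (inner : P → P → P → P → ℝ)
    (hpos : ∀ A B : P, 0 ≤ inner A B A B)
    (hdef : ∀ A B : P, inner A B A B = 0 ↔ A = B)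
    (hsymm : ∀ A B C D : P, inner A B C D = inner C D A B)
    (hadd : ∀ A B C L M : P, inner A C L M = inner A B L M + inner B C L M)
    (hneg : ∀ A B C D : P, inner B A C D = - inner A B C D)
    (A B D : P) (hAB : A ≠ B) (hAD : A ≠ D) (hBD : B ≠ D)
    (hdir : inner A B A D = -(Real.sqrt (inner A B A B) * Real.sqrt (inner A D A D))) :
    Real.sqrt (inner A D A D) = Real.sqrt (inner B D B D) - Real.sqrt (inner A B A B) := by
  set a := Real.sqrt (inner A B A B) with ha
  set d := Real.sqrt (inner A D A D) with hd
  have ha2 : inner A B A B = a ^ 2 := (Real.sq_sqrt (hpos A B)).symm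
  have hd2 : inner A D A D = d ^ 2 := (Real.sq_sqrt (hpos A D)).symm
  -- inner B A B A = inner A B A B
  have hba : inner B A B A = inner A B A B := by
    rw [hneg, hsymm, hneg, neg_neg]
  -- expand inner B D B D
  have hexp : inner B D B D = inner A B A B + inner A D A D - 2 * inner A B A D := by
    have e1 : inner B D B D = inner B A B D + inner A D B D := hadd B A D B D
    have e2 : inner B A B D = inner B A B A + inner A D B A := by
      rw [hsymm B A B D, hadd B A D B A, hsymm B A B A, hsymm A D B A]
    have e3 : inner A D B D = inner B A A D + inner A D A D := by
      rw [hsymm A D B D, hadd B A D A D, hsymm A D A D]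
    have e4 : inner A D B A = - inner A B A D := by
      rw [hsymm, hneg]
    have e5 : inner B A A D = - inner A B A D := hneg A B A D
    rw [e1, e2, e3, e4, e5, hba]
    ring
  have hbd2 : inner B D B D = (a + d) ^ 2 := by
    rw [hexp, hdir, ha2, hd2]; ring
  have : Real.sqrt (inner B D B D) = a + d := by
    rw [hbd2, Real.sqrt_sq (add_nonneg (Real.sqrt_nonneg _) (Real.sqrt_nonneg _))]
  rw [this]; ring
end

section
/- The relation R on arrows defined by: AB R CD iff (A = B and C = D) or (A ≠ B, C ≠ D, ‖AB‖ = ‖CD‖ and ⟪AB,CD⟫ = ‖AB‖·‖CD‖), is an equivalence relation on arrows, given the substitution axiom that equivalent arrows have equal pre-inner products (if AB R CD and EF R GH then ⟪AB,EF⟫ = ⟪CD,GH⟫). -/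
/-- The same-length-same-direction relation on arrows: AB R CD iff
(A = B and C = D) or (A ≠ B, C ≠ D, ‖AB‖ = ‖CD‖ and ⟪AB,CD⟫ = ‖AB‖·‖CD‖). -/
def ArrowRel {P : Type*} (inner : P → P → P → P → ℝ) (X Y : P × P) : Prop :=
  (X.1 = X.2 ∧ Y.1 = Y.2) ∨
  (X.1 ≠ X.2 ∧ Y.1 ≠ Y.2 ∧
    Real.sqrt (inner X.1 X.2 X.1 X.2) = Real.sqrt (inner Y.1 Y.2 Y.1 Y.2) ∧
    inner X.1 X.2 Y.1 Y.2 =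
      Real.sqrt (inner X.1 X.2 X.1 X.2) * Real.sqrt (inner Y.1 Y.2 Y.1 Y.2))

/-- Given the substitution axiom, the relation R is an equivalence relation on arrows. -/
theorem arrowRel_equivalence {P : Type*} (inner : P → P → P → P → ℝ)
    (hpos : ∀ A B : P, 0 ≤ inner A B A B)
    (hdef : ∀ A B : P, inner A B A B = 0 ↔ A = B)
    (hsymm : ∀ A B C D : P, inner A B C D = inner C D A B)
    (hadd : ∀ A B C L M : P, inner A C L M = inner A B L M + inner B C L M)
    (hneg : ∀ A B C D : P, inner B A C D = - inner A B C D)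
    (hsubst : ∀ A B C D E F G H : P,
      ArrowRel inner (A, B) (C, D) → ArrowRel inner (E, F) (G, H) →
        inner A B E F = inner C D G H) :
    Equivalence (ArrowRel inner) := by
  have hrefl : ∀ X : P × P, ArrowRel inner X X := by
    intro ⟨A, B⟩
    by_cases h : A = B
    · exact Or.inl ⟨h, h⟩
    · exact Or.inr ⟨h, h, rfl, (Real.mul_self_sqrt (hpos A B)).symm⟩
  constructor
  · exact hrefl
  · rintro ⟨A, B⟩ ⟨C, D⟩ (⟨h1, h2⟩ | ⟨h1, h2, h3, h4⟩)
    · exact Or.inl ⟨h2, h1⟩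
    · exact Or.inr ⟨h2, h1, h3.symm, by rw [hsymm, h4, h3, mul_comm]⟩
  · rintro ⟨A, B⟩ ⟨C, D⟩ ⟨E, F⟩ hAB hCD
    rcases hAB with ⟨h1, h2⟩ | ⟨h1, h2, h3, h4⟩
    · rcases hCD with ⟨_, h6⟩ | ⟨h5, _⟩
      · exact Or.inl ⟨h1, h6⟩
      · exact absurd h2 h5
    · rcases hCD with ⟨h5, _⟩ | ⟨_, h6, h7, h8⟩
      · exact absurd h5 h2
      · refine Or.inr ⟨h1, h6, h3.trans h7, ?_⟩
        have := hsubst A B C D E F E F (Or.inr ⟨h1, h2, h3, h4⟩) (hrefl (E, F))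
        rw [this, h8, h7, h3, h7]
end
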